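/- If O is a trace-class operator on L²(ℝᵈ), then the second quantization dΓ_F(O) extends to a bounded operator on fermionic Fock space with ‖dΓ_F(O)Ψ‖ ≤ ‖O‖_{Tr} ‖Ψ‖ for all Ψ. -/

import Mathlib

/-!
Adjointness and the relation `{a f, a* g} = ⟪f, g⟫` give `‖a f x‖² + ‖a* f x‖² = ‖f‖² ‖x‖²`,
and they force `f ↦ a f` to be conjugate linear, because an operator `D` with
`D* D + D D* = 0` vanishes. Hence `⟪Φ, dΓ(O) Ψ⟫ = ∑ᵢ B (eᵢ, O eᵢ)` for the bounded
sesquilinear form `B (v, w) = ⟪a w Φ, a v Ψ⟫` of norm at most `‖Φ‖ ‖Ψ‖`. Expanding `O eᵢ` by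
the singular value decomposition and exchanging the absolutely convergent double sum turns
this trace into `∑ⱼ sⱼ B (ψⱼ, φⱼ)`, which is at most `‖O‖_Tr ‖Φ‖ ‖Ψ‖` in norm.
-/

open scoped InnerProductSpace
open ContinuousLinearMap

section InnerProductSpace

variable {ι κ 𝕜 H : Type*} [RCLike 𝕜] [NormedAddCommGroup H] [InnerProductSpace 𝕜 H]

theorem norm_le_of_forall_norm_inner_le {y : H} {c : ℝ} (hc : 0 ≤ c)
    (h : ∀ x, ‖⟪x, y⟫_𝕜‖ ≤ c * ‖x‖) : ‖y‖ ≤ c := by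
  rw [← (InnerProductSpace.toDualMap 𝕜 H).norm_map y]
  refine opNorm_le_bound _ hc fun x => ?_
  rw [InnerProductSpace.toDualMap_apply_apply, norm_inner_symm]
  exact h x

theorem norm_inner_mul_norm_inner_le_half_add_sq (x y z : H) :
    ‖⟪x, z⟫_𝕜‖ * ‖⟪z, y⟫_𝕜‖ ≤ (‖⟪z, x⟫_𝕜‖ ^ 2 + ‖⟪z, y⟫_𝕜‖ ^ 2) / 2 := by
  rw [norm_inner_symm]
  linarith [two_mul_le_add_sq ‖⟪z, x⟫_𝕜‖ ‖⟪z, y⟫_𝕜‖]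

namespace Orthonormal

variable {v : ι → H}

theorem summable_norm_inner_mul_norm_inner (hv : Orthonormal 𝕜 v) (x y : H) :
    Summable fun i => ‖⟪x, v i⟫_𝕜‖ * ‖⟪v i, y⟫_𝕜‖ :=
  .of_nonneg_of_le (fun _ => by positivity)
    (fun i => norm_inner_mul_norm_inner_le_half_add_sq x y (v i))
    (((hv.inner_products_summable x).add (hv.inner_products_summable y)).div_const 2)

theorem tsum_norm_inner_mul_norm_inner_le (hv : Orthonormal 𝕜 v) (x y : H) :
    ∑' i, ‖⟪x, v i⟫_𝕜‖ * ‖⟪v i, y⟫_𝕜‖ ≤ (‖x‖ ^ 2 + ‖y‖ ^ 2) / 2 :=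
  calc ∑' i, ‖⟪x, v i⟫_𝕜‖ * ‖⟪v i, y⟫_𝕜‖
      ≤ ∑' i, (‖⟪v i, x⟫_𝕜‖ ^ 2 + ‖⟪v i, y⟫_𝕜‖ ^ 2) / 2 :=
        (hv.summable_norm_inner_mul_norm_inner x y).tsum_le_tsum
          (fun i => norm_inner_mul_norm_inner_le_half_add_sq x y (v i))
          (((hv.inner_products_summable x).add (hv.inner_products_summable y)).div_const 2)
    _ = (∑' i, ‖⟪v i, x⟫_𝕜‖ ^ 2 + ∑' i, ‖⟪v i, y⟫_𝕜‖ ^ 2) / 2 := by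
        rw [tsum_div_const, (hv.inner_products_summable x).tsum_add (hv.inner_products_summable y)]
    _ ≤ (‖x‖ ^ 2 + ‖y‖ ^ 2) / 2 := by
        gcongr <;> exact hv.tsum_inner_products_le _

end Orthonormal

variable [CompleteSpace H]

theorem ContinuousLinearMap.norm_sq_add_norm_sq_adjoint_apply (D : H →L[𝕜] H) (x : H) :
    ‖D x‖ ^ 2 + ‖adjoint D x‖ ^ 2 = RCLike.re ⟪x, adjoint D (D x) + D (adjoint D x)⟫_𝕜 := by
  rw [inner_add_right, map_add, adjoint_inner_right, ← adjoint_inner_left D (adjoint D x) x,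
    inner_self_eq_norm_sq, inner_self_eq_norm_sq]

theorem ContinuousLinearMap.eq_zero_of_anticomm_adjoint_eq_zero (D : H →L[𝕜] H)
    (h : ∀ x, adjoint D (D x) + D (adjoint D x) = 0) : D = 0 := by
  ext x
  have hx := D.norm_sq_add_norm_sq_adjoint_apply x
  rw [h, inner_zero_right, map_zero] at hx
  simpa using (add_eq_zero_iff_of_nonneg (by positivity) (by positivity)).1 hx |>.1

open InnerProductSpace in
theorem HilbertBasis.hasSum_sesq_apply_of_svd (b : HilbertBasis ι 𝕜 H)
    (B : H →L⋆[𝕜] H →L[𝕜] 𝕜) (O : H →L[𝕜] H) (s : κ → ℝ) (hs : ∀ j, 0 ≤ s j)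
    (hsum : Summable s) (ψ φ : κ → H) (hψ : ∀ j, ‖ψ j‖ ≤ 1) (hφ : ∀ j, ‖φ j‖ ≤ 1)
    (hO : ∀ x, HasSum (fun j => (s j : 𝕜) • (⟪ψ j, x⟫_𝕜 • φ j)) (O x)) :
    HasSum (fun i => B (b i) (O (b i))) (∑' j, (s j : 𝕜) * B (ψ j) (φ j)) := by
  set t : κ × ι → 𝕜 := fun p => s p.1 * (⟪ψ p.1, b p.2⟫_𝕜 * B (b p.2) (φ p.1)) with ht
  have hrow (j : κ) : HasSum (fun i => t (j, i)) (s j * B (ψ j) (φ j)) := by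
    have h := (b.hasSum_repr (ψ j)).mapL (B.flip (φ j))
    simp only [map_smulₛₗ, flip_apply, b.repr_apply_apply, inner_conj_symm, smul_eq_mul] at h
    exact h.mul_left _
  have hcol (i : ι) : HasSum (fun j => t (j, i)) (B (b i) (O (b i))) := by
    have h := (hO (b i)).mapL (B (b i))
    simpa only [map_smul, smul_eq_mul, mul_assoc, mul_comm (B (b i) (φ _))] using h
  -- Writing `B v w = ⟪v, M w⟫` lets Bessel's inequality control the rows of `t` in `ℓ¹`.
  set M := adjoint (continuousLinearMapOfBilin B)
  have hM (v w : H) : B v w = ⟪v, M w⟫_𝕜 := by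
    rw [adjoint_inner_right, continuousLinearMapOfBilin_apply]
  have hnorm (p : κ × ι) :
      ‖t p‖ = s p.1 * (‖⟪ψ p.1, b p.2⟫_𝕜‖ * ‖⟪b p.2, M (φ p.1)⟫_𝕜‖) := by
    simp only [ht, norm_mul, hM, RCLike.norm_ofReal, abs_of_nonneg (hs p.1)]
  have hrow_le (j : κ) : ∑' i, ‖t (j, i)‖ ≤ s j * ((1 + ‖M‖ ^ 2) / 2) := by
    simp only [hnorm]
    rw [tsum_mul_left]
    gcongr
    · exact hs j
    refine (b.orthonormal.tsum_norm_inner_mul_norm_inner_le _ _).trans ?_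
    gcongr
    · exact pow_le_one₀ (norm_nonneg _) (hψ j)
    · exact (M.le_opNorm _).trans (mul_le_of_le_one_right (norm_nonneg _) (hφ j))
  have hsumm : Summable t := by
    refine Summable.of_norm ((summable_prod_of_nonneg fun _ => norm_nonneg _).2 ⟨fun j => ?_, ?_⟩)
    · simp only [hnorm]
      exact (b.orthonormal.summable_norm_inner_mul_norm_inner _ _).mul_left _
    · exact .of_nonneg_of_le (fun _ => tsum_nonneg fun _ => norm_nonneg _) hrow_le
        (hsum.mul_right _)
  have hrows := hsumm.hasSum.prod_fiberwise hrow
  have hcols := hsumm.prod_symm.hasSum.prod_fiberwise hcol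
  rwa [show ∑' p : ι × κ, t p.swap = ∑' p, t p from (Equiv.prodComm ι κ).tsum_eq t,
    ← hrows.tsum_eq] at hcols

theorem HilbertBasis.norm_tsum_sesq_apply_le_of_svd (b : HilbertBasis ι 𝕜 H)
    (B : H →L⋆[𝕜] H →L[𝕜] 𝕜) (O : H →L[𝕜] H) {s : κ → ℝ} (hs : ∀ j, 0 ≤ s j) {T : ℝ}
    (hT : HasSum s T) (ψ φ : κ → H) (hψ : ∀ j, ‖ψ j‖ ≤ 1) (hφ : ∀ j, ‖φ j‖ ≤ 1)
    (hO : ∀ x, HasSum (fun j => (s j : 𝕜) • (⟪ψ j, x⟫_𝕜 • φ j)) (O x)) :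
    ‖∑' i, B (b i) (O (b i))‖ ≤ T * ‖B‖ := by
  rw [(b.hasSum_sesq_apply_of_svd B O s hs hT.summable ψ φ hψ hφ hO).tsum_eq]
  refine tsum_of_norm_bounded (hT.mul_right ‖B‖) fun j => ?_
  rw [norm_mul, RCLike.norm_ofReal, abs_of_nonneg (hs j)]
  gcongr
  · exact hs j
  calc ‖B (ψ j) (φ j)‖ ≤ ‖B‖ * ‖ψ j‖ * ‖φ j‖ := B.le_opNorm₂ _ _
    _ ≤ ‖B‖ := by
      rw [mul_assoc]
      exact mul_le_of_le_one_right (norm_nonneg B) (mul_le_one₀ (hψ j) (norm_nonneg _) (hφ j))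

end InnerProductSpace

section CAR

variable {H F : Type*} [NormedAddCommGroup H] [InnerProductSpace ℂ H]
  [NormedAddCommGroup F] [InnerProductSpace ℂ F] [CompleteSpace F]

structure IsCARPair (a astar : H → F →L[ℂ] F) : Prop where
  adjoint_eq : ∀ f, astar f = adjoint (a f)
  anticomm : ∀ f g x, a f (astar g x) + astar g (a f x) = ⟪f, g⟫_ℂ • x

namespace IsCARPair

variable {a astar : H → F →L[ℂ] F} (hA : IsCARPair a astar)
include hA

theorem adjoint_creation (f : H) : adjoint (astar f) = a f := by
  rw [hA.adjoint_eq, adjoint_adjoint]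

theorem inner_creation_right (f : H) (x y : F) : ⟪x, astar f y⟫_ℂ = ⟪a f x, y⟫_ℂ := by
  rw [hA.adjoint_eq, adjoint_inner_right]

theorem norm_annihilation_apply_le (f : H) (x : F) : ‖a f x‖ ≤ ‖f‖ * ‖x‖ := by
  have h := (astar f).norm_sq_add_norm_sq_adjoint_apply x
  rw [hA.adjoint_creation, hA.anticomm, inner_smul_right, inner_self_eq_norm_sq_to_K,
    inner_self_eq_norm_sq_to_K] at h
  have : ‖a f x‖ ^ 2 ≤ (‖f‖ * ‖x‖) ^ 2 := by
    rw [mul_pow]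
    norm_cast at h
    linarith [sq_nonneg ‖astar f x‖]
  exact (sq_le_sq₀ (norm_nonneg _) (by positivity)).1 this

theorem creation_add_smul (u v : H) (c : ℂ) : astar (u + c • v) = astar u + c • astar v := by
  set D := astar (u + c • v) - astar u - c • astar v
  have hD (f : H) (x : F) : a f (D x) + D (a f x) = 0 := by
    have h₁ := hA.anticomm f (u + c • v) x
    have h₂ := hA.anticomm f u x
    have h₃ := hA.anticomm f v x
    simp only [D, sub_apply, smul_apply, map_sub, map_smul]
    rw [inner_add_right, inner_smul_right] at h₁
    linear_combination (norm := module) h₁ - h₂ - c • h₃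
  have hD' : adjoint D = a (u + c • v) - a u - (starRingEnd ℂ c) • a v := by
    simp only [D, map_sub, map_smulₛₗ, hA.adjoint_creation]
  have := D.eq_zero_of_anticomm_adjoint_eq_zero fun x => by
    have h₁ := hD (u + c • v) x
    have h₂ := hD u x
    have h₃ := hD v x
    simp only [hD', sub_apply, smul_apply, map_sub, map_smul]
    linear_combination (norm := module) h₁ - h₂ - (starRingEnd ℂ c) • h₃
  rw [← sub_eq_zero, ← sub_sub]
  exact this

theorem annihilation_add_smul (u v : H) (c : ℂ) :
    a (u + c • v) = a u + (starRingEnd ℂ c) • a v := by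
  simp only [← hA.adjoint_creation, hA.creation_add_smul, map_add, map_smulₛₗ]

theorem annihilation_add (u v : H) : a (u + v) = a u + a v := by
  simpa using hA.annihilation_add_smul u v 1

theorem annihilation_smul (c : ℂ) (v : H) : a (c • v) = (starRingEnd ℂ c) • a v := by
  have h₀ : a 0 = 0 := by simpa using hA.annihilation_add 0 0
  simpa [h₀] using hA.annihilation_add_smul 0 v c

noncomputable def sesqForm (Φ Ψ : F) : H →L⋆[ℂ] H →L[ℂ] ℂ :=
  LinearMap.mkContinuous₂
    (LinearMap.mk₂'ₛₗ (starRingEnd ℂ) (RingHom.id ℂ) (fun v w => ⟪a w Φ, a v Ψ⟫_ℂ)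
      (fun _ _ _ => by simp only [hA.annihilation_add, add_apply, inner_add_right])
      (fun _ _ _ => by simp only [hA.annihilation_smul, smul_apply, inner_smul_right, smul_eq_mul])
      (fun _ _ _ => by simp only [hA.annihilation_add, add_apply, inner_add_left])
      (fun _ _ _ => by
        simp only [hA.annihilation_smul, smul_apply, inner_smul_left, RCLike.conj_conj,
          RingHom.id_apply, smul_eq_mul]))
    (‖Φ‖ * ‖Ψ‖) fun v w => by
      calc ‖⟪a w Φ, a v Ψ⟫_ℂ‖ ≤ ‖a w Φ‖ * ‖a v Ψ‖ := norm_inner_le_norm _ _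
        _ ≤ (‖w‖ * ‖Φ‖) * (‖v‖ * ‖Ψ‖) := by
          gcongr <;> exact hA.norm_annihilation_apply_le _ _
        _ = ‖Φ‖ * ‖Ψ‖ * ‖v‖ * ‖w‖ := by ring

@[simp]
theorem sesqForm_apply (Φ Ψ : F) (v w : H) : hA.sesqForm Φ Ψ v w = ⟪a w Φ, a v Ψ⟫_ℂ := rfl

theorem norm_sesqForm_le (Φ Ψ : F) : ‖hA.sesqForm Φ Ψ‖ ≤ ‖Φ‖ * ‖Ψ‖ :=
  LinearMap.mkContinuous₂_norm_le _ (by positivity) _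

end IsCARPair

end CAR

theorem fermionic_second_quantization_traceClass_estimate_general
    {H F : Type*}
    [NormedAddCommGroup H] [InnerProductSpace ℂ H] [CompleteSpace H]
    [NormedAddCommGroup F] [InnerProductSpace ℂ F] [CompleteSpace F]
    (a astar : H → F →L[ℂ] F)
    (h_adjoint : ∀ f, astar f = ContinuousLinearMap.adjoint (a f))
    (h_CAR : ∀ f g x, a f (astar g x) + astar g (a f x) = (inner ℂ f g : ℂ) • x)
    (e : ℕ → H) (he : Orthonormal ℂ e)
    (he' : (Submodule.span ℂ (Set.range e)).topologicalClosure = ⊤)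
    (O : H →L[ℂ] H)
    (s : ℕ → ℝ) (hs : ∀ i, 0 ≤ s i) (T : ℝ) (hT : HasSum s T)
    (ψv φv : ℕ → H) (hψ : Orthonormal ℂ ψv) (hφ : Orthonormal ℂ φv)
    (hO : ∀ x, HasSum (fun i => (s i : ℂ) • ((inner ℂ (ψv i) x : ℂ) • φv i)) (O x))
    (dΓO : F →ₗ[ℂ] F)
    (hdΓ : ∀ Ψ : F, HasSum (fun i => astar (O (e i)) (a (e i) Ψ)) (dΓO Ψ)) :
    ∀ Ψ : F, ‖dΓO Ψ‖ ≤ T * ‖Ψ‖ := by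
  have hA : IsCARPair a astar := ⟨h_adjoint, h_CAR⟩
  let b : HilbertBasis ℕ ℂ H := HilbertBasis.mk he he'.ge
  have hb : ⇑b = e := HilbertBasis.coe_mk he he'.ge
  intro Ψ
  refine norm_le_of_forall_norm_inner_le (𝕜 := ℂ) (mul_nonneg (hT.nonneg hs) (norm_nonneg Ψ))
    fun Φ => ?_
  have h_trace : HasSum (fun i => hA.sesqForm Φ Ψ (b i) (O (b i))) ⟪Φ, dΓO Ψ⟫_ℂ := by
    simpa only [hb, IsCARPair.sesqForm_apply, innerSL_apply_apply, hA.inner_creation_right]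
      using (hdΓ Ψ).mapL (innerSL ℂ Φ)
  calc ‖⟪Φ, dΓO Ψ⟫_ℂ‖ = ‖∑' i, hA.sesqForm Φ Ψ (b i) (O (b i))‖ := by rw [h_trace.tsum_eq]
    _ ≤ T * ‖hA.sesqForm Φ Ψ‖ :=
      b.norm_tsum_sesq_apply_le_of_svd _ O hs hT ψv φv (fun j => (hψ.1 j).le)
        (fun j => (hφ.1 j).le) hO
    _ ≤ T * (‖Φ‖ * ‖Ψ‖) := by gcongr; exacts [hT.nonneg hs, hA.norm_sesqForm_le Φ Ψ]
    _ = T * ‖Ψ‖ * ‖Φ‖ := by ring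

/-- If `O` is a trace-class operator on the one-particle space, given by a
singular value decomposition `O = Σᵢ sᵢ |φᵢ⟩⟨ψᵢ|` with `sᵢ ≥ 0`, orthonormal families
`(ψᵢ)`, `(φᵢ)` and trace norm `‖O‖_Tr = Σᵢ sᵢ = T`, then the second quantization
`dΓ_F(O) = Σᵢ a*(O eᵢ) a(eᵢ)` extends to a bounded operator on fermionic Fock space with
`‖dΓ_F(O)Ψ‖ ≤ ‖O‖_Tr ‖Ψ‖` for all `Ψ`. -/
theorem fermionic_second_quantization_traceClass_estimate
    {H F : Type*}
    [NormedAddCommGroup H] [InnerProductSpace ℂ H] [CompleteSpace H]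
    [NormedAddCommGroup F] [InnerProductSpace ℂ F] [CompleteSpace F]
    (a astar : H → F →L[ℂ] F)
    (h_adjoint : ∀ f, astar f = ContinuousLinearMap.adjoint (a f))
    (h_CAR : ∀ f g x, a f (astar g x) + astar g (a f x) = (inner ℂ f g : ℂ) • x)
    (h_CAR' : ∀ f g x, a f (a g x) + a g (a f x) = 0)
    (e : ℕ → H) (he : Orthonormal ℂ e)
    (he' : (Submodule.span ℂ (Set.range e)).topologicalClosure = ⊤)
    (O : H →L[ℂ] H)
    (s : ℕ → ℝ) (hs : ∀ i, 0 ≤ s i) (T : ℝ) (hT : HasSum s T)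
    (ψv φv : ℕ → H) (hψ : Orthonormal ℂ ψv) (hφ : Orthonormal ℂ φv)
    (hO : ∀ x, HasSum (fun i => (s i : ℂ) • ((inner ℂ (ψv i) x : ℂ) • φv i)) (O x))
    (dΓO : F →ₗ[ℂ] F)
    (hdΓ : ∀ Ψ : F, HasSum (fun i => astar (O (e i)) (a (e i) Ψ)) (dΓO Ψ)) :
    ∀ Ψ : F, ‖dΓO Ψ‖ ≤ T * ‖Ψ‖ :=
  fermionic_second_quantization_traceClass_estimate_general a astar h_adjoint h_CAR e he he' O s hs
    T hT ψv φv hψ hφ hO dΓO hdΓ
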